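/- arXiv:1110.1814 — 2 statements merged into one kernel-verified Lean document; each statement's English description precedes it below -/
import Mathlib

section
/- Let A be a self-adjoint positive operator with compact inverse on a Hilbert space H, with smallest eigenvalue λ₁ > 0, and let h, α > 0. Consider the abstract damped plate equation n_tt + (A + h²A²) n + α n_t = 0. Then the associated semigroup T_t on H_σ × H_{2+σ} (where H_s = D(A^{s/2})) is exponentially stable: there exist M, ω > 0 with ‖T_t w‖ ≤ M e^{-ωt} ‖w‖ for all w ∈ H_σ × H_{2+σ} and t ≥ 0. -/
/-!
Each eigenmode `(n k, n' k)` is a damped harmonic oscillator `y'' + α y' + c y = 0` with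
stiffness `c = λ + h²λ²` bounded below by `c₀ = λ₁ + h²λ₁²`. For such an oscillator the
perturbed energy `x² + c y² + 2ε x y`, with `ε` small in terms of `α` and `c₀` only, is
equivalent to the energy `x² + c y²` and decays like `e^{-2ωt}`, with `ω` independent of the
mode. Since `h > 0` and `λ ≥ λ₁`, the weight `c` is comparable to `λ²` uniformly in `k`, so the
mode energies are comparable to the `H_σ × H_{2+σ}` contributions `λ^σ (x² + λ² y²)`, and
summing over the modes gives the theorem.
-/

open Filter Real

theorem le_mul_exp_of_hasDerivAt_le_mul {f f' : ℝ → ℝ} {K : ℝ}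
    (hf : ∀ t, HasDerivAt f (f' t) t) (hbound : ∀ t, f' t ≤ K * f t) {t : ℝ} (ht : 0 ≤ t) :
    f t ≤ f 0 * exp (K * t) := by
  have h := le_gronwallBound_of_liminf_deriv_right_le (ε := 0) (a := 0) (b := t)
    (fun s _ => (hf s).continuousAt.continuousWithinAt)
    (fun s _ _ hr => (hf s).hasDerivWithinAt.liminf_right_slope_le hr) le_rfl
    (fun s _ => by simpa using hbound s) t ⟨ht, le_rfl⟩
  rwa [sub_zero, gronwallBound_ε0] at h

section DampedOscillator

def perturbedEnergy (c ε X Y : ℝ) : ℝ := X ^ 2 + c * Y ^ 2 + 2 * ε * (X * Y)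

variable {c α ε : ℝ} {x y : ℝ → ℝ}

theorem half_sq_add_le_perturbedEnergy (hε : 4 * ε ^ 2 ≤ c) (X Y : ℝ) :
    (X ^ 2 + c * Y ^ 2) / 2 ≤ perturbedEnergy c ε X Y := by
  unfold perturbedEnergy
  nlinarith [sq_nonneg (X + 2 * ε * Y), mul_nonneg (sub_nonneg.2 hε) (sq_nonneg Y)]

theorem perturbedEnergy_le_three_halves_sq_add (hε : 4 * ε ^ 2 ≤ c) (X Y : ℝ) :
    perturbedEnergy c ε X Y ≤ 3 / 2 * (X ^ 2 + c * Y ^ 2) := by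
  unfold perturbedEnergy
  nlinarith [sq_nonneg (X - 2 * ε * Y), mul_nonneg (sub_nonneg.2 hε) (sq_nonneg Y)]

theorem perturbedEnergy_dissipation {ω : ℝ} (hε : 0 < ε)
    (hεα : ε ≤ α / 4) (hεc : ε * α ≤ c) (hε2 : 4 * ε ^ 2 ≤ c)
    (hω : 0 < ω) (hωε : 3 * ω ≤ ε) (X Y : ℝ) :
    2 * (ε - α) * X ^ 2 - 2 * ε * c * Y ^ 2 - 2 * ε * α * (X * Y)
      ≤ -(2 * ω) * perturbedEnergy c ε X Y := by
  unfold perturbedEnergy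
  have hc : 0 ≤ c := by nlinarith
  nlinarith [mul_nonneg hω.le (sq_nonneg (X - 2 * ε * Y)),
    mul_nonneg (by linarith : (0 : ℝ) ≤ α) (sq_nonneg (X + ε * Y)),
    mul_nonneg (mul_nonneg hω.le (sub_nonneg.2 hε2)) (sq_nonneg Y),
    mul_nonneg (mul_nonneg hε.le (sub_nonneg.2 hεc)) (sq_nonneg Y),
    sq_nonneg X, mul_nonneg hc (sq_nonneg Y)]

theorem hasDerivAt_perturbedEnergy (hy : ∀ t, HasDerivAt y (x t) t)
    (hx : ∀ t, HasDerivAt x (-(c * y t + α * x t)) t) (t : ℝ) :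
    HasDerivAt (fun s => perturbedEnergy c ε (x s) (y s))
      (2 * (ε - α) * x t ^ 2 - 2 * ε * c * y t ^ 2 - 2 * ε * α * (x t * y t)) t :=
  ((((hx t).pow 2).add (((hy t).pow 2).const_mul c)).add
    (((hx t).mul (hy t)).const_mul (2 * ε))).congr_deriv (by ring)

theorem dampedOscillator_energy_le {ω : ℝ} (hε : 0 < ε)
    (hεα : ε ≤ α / 4) (hεc : ε * α ≤ c) (hε2 : 4 * ε ^ 2 ≤ c)
    (hω : 0 < ω) (hωε : 3 * ω ≤ ε)
    (hy : ∀ t, HasDerivAt y (x t) t) (hx : ∀ t, HasDerivAt x (-(c * y t + α * x t)) t)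
    {t : ℝ} (ht : 0 ≤ t) :
    x t ^ 2 + c * y t ^ 2 ≤ 3 * exp (-2 * ω * t) * (x 0 ^ 2 + c * y 0 ^ 2) := by
  have hdecay := le_mul_exp_of_hasDerivAt_le_mul (hasDerivAt_perturbedEnergy hy hx)
    (fun s => perturbedEnergy_dissipation hε hεα hεc hε2 hω hωε (x s) (y s)) ht
  have hlow := half_sq_add_le_perturbedEnergy hε2 (x t) (y t)
  have hupp := perturbedEnergy_le_three_halves_sq_add hε2 (x 0) (y 0)
  rw [show -(2 * ω) * t = -2 * ω * t by ring] at hdecay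
  calc x t ^ 2 + c * y t ^ 2
      ≤ 2 * (perturbedEnergy c ε (x 0) (y 0) * exp (-2 * ω * t)) := by linarith
    _ ≤ 2 * (3 / 2 * (x 0 ^ 2 + c * y 0 ^ 2) * exp (-2 * ω * t)) := by gcongr
    _ = 3 * exp (-2 * ω * t) * (x 0 ^ 2 + c * y 0 ^ 2) := by ring

theorem exists_dampedOscillator_energy_decay {c₀ : ℝ} (hc₀ : 0 < c₀) (hα : 0 < α) :
    ∃ ω > 0, ∀ c, c₀ ≤ c → ∀ x y : ℝ → ℝ, (∀ t, HasDerivAt y (x t) t) →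
      (∀ t, HasDerivAt x (-(c * y t + α * x t)) t) → ∀ t, 0 ≤ t →
        x t ^ 2 + c * y t ^ 2 ≤ 3 * exp (-2 * ω * t) * (x 0 ^ 2 + c * y 0 ^ 2) := by
  set ε := min (α / 4) (min (c₀ / α) (sqrt c₀ / 2))
  have hε : 0 < ε := lt_min (by positivity) (lt_min (by positivity) (by positivity))
  have hεα : ε ≤ α / 4 := min_le_left _ _
  have hεc : ε * α ≤ c₀ := by
    calc ε * α ≤ c₀ / α * α := by gcongr; exact (min_le_right _ _).trans (min_le_left _ _)
      _ = c₀ := div_mul_cancel₀ c₀ hα.ne'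
  have hε2 : 4 * ε ^ 2 ≤ c₀ := by
    have : ε ≤ sqrt c₀ / 2 := (min_le_right _ _).trans (min_le_right _ _)
    nlinarith [sq_sqrt hc₀.le, hε.le]
  exact ⟨ε / 3, by positivity, fun c hc x y hy hx t ht => dampedOscillator_energy_le
    hε hεα (hεc.trans hc) (hε2.trans hc) (by positivity) (by linarith)
    hy hx ht⟩

end DampedOscillator

theorem sq_add_mul_sq_le_of_energy_le {a b l c e X₁ Y₁ X₀ Y₀ : ℝ} (ha : 0 < a) (ha₁ : a ≤ 1)
    (hal : a * l ≤ c) (hb₁ : 1 ≤ b) (hcb : c ≤ b * l) (he : 0 ≤ e)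
    (hE : X₁ ^ 2 + c * Y₁ ^ 2 ≤ e * (X₀ ^ 2 + c * Y₀ ^ 2)) :
    X₁ ^ 2 + l * Y₁ ^ 2 ≤ b / a * e * (X₀ ^ 2 + l * Y₀ ^ 2) := by
  have hlow : a * (X₁ ^ 2 + l * Y₁ ^ 2) ≤ X₁ ^ 2 + c * Y₁ ^ 2 := by
    nlinarith [mul_nonneg (sub_nonneg.2 ha₁) (sq_nonneg X₁),
      mul_nonneg (sub_nonneg.2 hal) (sq_nonneg Y₁)]
  have hupp : X₀ ^ 2 + c * Y₀ ^ 2 ≤ b * (X₀ ^ 2 + l * Y₀ ^ 2) := by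
    nlinarith [mul_nonneg (sub_nonneg.2 hb₁) (sq_nonneg X₀),
      mul_nonneg (sub_nonneg.2 hcb) (sq_nonneg Y₀)]
  rw [mul_assoc, div_mul_eq_mul_div, le_div_iff₀' ha]
  calc a * (X₁ ^ 2 + l * Y₁ ^ 2) ≤ e * (X₀ ^ 2 + c * Y₀ ^ 2) := hlow.trans hE
    _ ≤ e * (b * (X₀ ^ 2 + l * Y₀ ^ 2)) := by gcongr
    _ = b * (e * (X₀ ^ 2 + l * Y₀ ^ 2)) := by ring

theorem min_one_sq_mul_sq_le_add_sq_mul_sq {l : ℝ} (hl : 0 ≤ l) (h : ℝ) :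
    min 1 (h ^ 2) * l ^ 2 ≤ l + h ^ 2 * l ^ 2 := by
  nlinarith [mul_le_mul_of_nonneg_right (min_le_right 1 (h ^ 2)) (sq_nonneg l)]

theorem add_sq_mul_sq_le_max_mul_sq {l₁ l : ℝ} (hl₁ : 0 < l₁) (hl : l₁ ≤ l) (h : ℝ) :
    l + h ^ 2 * l ^ 2 ≤ max 1 (l₁⁻¹ + h ^ 2) * l ^ 2 := by
  have hl_le : l ≤ l₁⁻¹ * l ^ 2 := by
    rw [inv_mul_eq_div, le_div_iff₀ hl₁]; nlinarith
  nlinarith [mul_le_mul_of_nonneg_right (le_max_right 1 (l₁⁻¹ + h ^ 2)) (sq_nonneg l)]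

theorem rpow_mul_sq_add_rpow_two_add_mul_sq {l : ℝ} (hl : 0 < l) (σ X Y : ℝ) :
    l ^ σ * X ^ 2 + l ^ (2 + σ) * Y ^ 2 = l ^ σ * (X ^ 2 + l ^ 2 * Y ^ 2) := by
  rw [rpow_add hl, rpow_two]; ring

theorem tsum_add_tsum_le_mul {ι : Type*} {f g u v : ι → ℝ} {C : ℝ} (hf : Summable f)
    (hg : Summable g) (hu : Summable u) (hv : Summable v) (h : ∀ i, f i + g i ≤ C * (u i + v i)) :
    ∑' i, f i + ∑' i, g i ≤ C * (∑' i, u i + ∑' i, v i) := by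
  rw [← hf.tsum_add hg, ← hu.tsum_add hv, ← tsum_mul_left]
  exact (hf.add hg).tsum_le_tsum h ((hu.add hv).mul_left C)

theorem stmt4_general (lam : ℕ → ℝ) (hlam : ∀ k, 0 < lam k) (hmono : Monotone lam)
    (σ h α : ℝ) (hh : 0 < h) (hα : 0 < α) :
    ∃ M > (0:ℝ), ∃ ω > (0:ℝ), ∀ (n n' : ℝ → ℕ → ℝ),
      (∀ k t, HasDerivAt (fun s => n s k) (n' t k) t) →
      (∀ k t, HasDerivAt (fun s => n' s k)
        (-((lam k + h ^ 2 * (lam k) ^ 2) * n t k + α * n' t k)) t) →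
      (∀ t, Summable (fun k => lam k ^ σ * (n' t k) ^ 2)) →
      (∀ t, Summable (fun k => lam k ^ (2 + σ) * (n t k) ^ 2)) →
      ∀ t, 0 ≤ t →
        (∑' k, lam k ^ σ * (n' t k) ^ 2) + (∑' k, lam k ^ (2 + σ) * (n t k) ^ 2) ≤
          M ^ 2 * Real.exp (-2 * ω * t) *
            ((∑' k, lam k ^ σ * (n' 0 k) ^ 2) + (∑' k, lam k ^ (2 + σ) * (n 0 k) ^ 2)) := by
  have hlam₀ := hlam 0
  have hstiff (k : ℕ) : lam 0 + h ^ 2 * lam 0 ^ 2 ≤ lam k + h ^ 2 * lam k ^ 2 := by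
    have := hmono (Nat.zero_le k); gcongr
  obtain ⟨ω, hω, hdecay⟩ :=
    exists_dampedOscillator_energy_decay (by positivity : 0 < lam 0 + h ^ 2 * lam 0 ^ 2) hα
  set a := min 1 (h ^ 2)
  set b := max 1 ((lam 0)⁻¹ + h ^ 2)
  have ha : 0 < a := lt_min one_pos (by positivity)
  have hC : 0 < b / a * 3 := by positivity
  refine ⟨sqrt (b / a * 3), sqrt_pos.2 hC, ω, hω, fun n n' hn hn' hs' hs t ht => ?_⟩
  rw [sq_sqrt hC.le]
  refine tsum_add_tsum_le_mul (hs' t) (hs t) (hs' 0) (hs 0) fun k => ?_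
  have hac := min_one_sq_mul_sq_le_add_sq_mul_sq (hlam k).le h
  have hcb := add_sq_mul_sq_le_max_mul_sq hlam₀ (hmono (Nat.zero_le k)) h
  have hE := hdecay _ (hstiff k) (fun s => n' s k) (fun s => n s k) (hn k) (hn' k) t ht
  have hmode := sq_add_mul_sq_le_of_energy_le ha (min_le_left _ _) hac (le_max_left _ _) hcb
    (by positivity) hE
  rw [rpow_mul_sq_add_rpow_two_add_mul_sq (hlam k), rpow_mul_sq_add_rpow_two_add_mul_sq (hlam k)]
  calc lam k ^ σ * (n' t k ^ 2 + lam k ^ 2 * n t k ^ 2)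
      ≤ lam k ^ σ * (b / a * (3 * exp (-2 * ω * t)) * (n' 0 k ^ 2 + lam k ^ 2 * n 0 k ^ 2)) :=
        mul_le_mul_of_nonneg_left hmode (rpow_nonneg (hlam k).le σ)
    _ = _ := by ring

/-- Exponential stability of the semigroup of the abstract damped plate equation
`n_tt + (A + h²A²)n + α n_t = 0` on `H_σ × H_{2+σ}`, where the self-adjoint
positive operator `A` with compact inverse is realized by its eigenvalue
sequence `lam` (diagonal model), and `H_s = D(A^{s/2})` carries the norm
`‖u‖_s² = ∑ lam k ^ s * (u k)²`. -/
theorem stmt4 (lam : ℕ → ℝ) (hlam : ∀ k, 0 < lam k) (hmono : Monotone lam)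
    (hcompact : Tendsto lam atTop atTop)
    (σ h α : ℝ) (hh : 0 < h) (hα : 0 < α) :
    ∃ M > (0:ℝ), ∃ ω > (0:ℝ), ∀ (n n' : ℝ → ℕ → ℝ),
      (∀ k t, HasDerivAt (fun s => n s k) (n' t k) t) →
      (∀ k t, HasDerivAt (fun s => n' s k)
        (-((lam k + h ^ 2 * (lam k) ^ 2) * n t k + α * n' t k)) t) →
      (∀ t, Summable (fun k => lam k ^ σ * (n' t k) ^ 2)) →
      (∀ t, Summable (fun k => lam k ^ (2 + σ) * (n t k) ^ 2)) →
      ∀ t, 0 ≤ t →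
        (∑' k, lam k ^ σ * (n' t k) ^ 2) + (∑' k, lam k ^ (2 + σ) * (n t k) ^ 2) ≤
          M ^ 2 * Real.exp (-2 * ω * t) *
            ((∑' k, lam k ^ σ * (n' 0 k) ^ 2) + (∑' k, lam k ^ (2 + σ) * (n 0 k) ^ 2)) :=
  stmt4_general lam hlam hmono σ h α hh hα
end

section
/- Let A be the Dirichlet Laplacian on a bounded smooth domain Ω ⊂ ℝ^d, d ≤ 3, h > 0, and suppose E ∈ H̄_2, E_t ∈ L²(Ω), n ∈ H_2, g ∈ L²(Ω) satisfy i E_t - (A + h²A²)E - nE + iγE = g in L²(Ω). Then E ∈ H̄_4 and ‖E‖_4 ≤ h^{-2}[‖E_t‖ + ‖g‖ + γ‖E‖ + C‖n‖_2 ‖E‖_2] for a constant C depending only on Ω. -/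
/-! Write the equation as `A E + h² A (A E) = i Eₜ - n E + i γ E - g`. Since `A` is accretive,
`⟪A E, h² A (A E)⟫` has nonnegative real part, so the two summands on the left are "at an acute
angle" and `h² ‖A (A E)‖` is bounded by the norm of their sum, i.e. by the norm of the right-hand
side; the triangle inequality and the algebra bound on `n E` finish the estimate. -/

open RCLike

section Accretive

variable {𝕜 H : Type*} [RCLike 𝕜] [NormedAddCommGroup H] [InnerProductSpace 𝕜 H]

theorem norm_le_norm_add_of_re_inner_nonneg {u v : H} (huv : 0 ≤ re (inner 𝕜 u v)) :
    ‖v‖ ≤ ‖u + v‖ := by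
  have hsq : ‖v‖ ^ 2 ≤ ‖u + v‖ ^ 2 := by
    rw [norm_add_sq (𝕜 := 𝕜)]
    linarith [sq_nonneg ‖u‖]
  exact (pow_le_pow_iff_left₀ (norm_nonneg v) (norm_nonneg _) two_ne_zero).1 hsq

/-- The elliptic estimate for `A + c A²` with `A` accretive. -/
theorem norm_apply_le_of_re_inner_apply_nonneg (A : H →ₗ[𝕜] H)
    (hpos : ∀ u, 0 ≤ re (inner 𝕜 u (A u))) {c : ℝ} (hc : 0 < c) (x : H) :
    ‖A x‖ ≤ (1 / c) * ‖x + (c : 𝕜) • A x‖ := by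
  have hre : 0 ≤ re (inner 𝕜 x ((c : 𝕜) • A x)) := by
    rw [inner_smul_right, re_ofReal_mul]
    exact mul_nonneg hc.le (hpos x)
  have key := norm_le_norm_add_of_re_inner_nonneg hre
  rw [norm_smul, norm_ofReal, abs_of_pos hc] at key
  rw [one_div_mul_eq_div, le_div_iff₀ hc]
  linarith

end Accretive

theorem stmt11_general {H : Type*} [NormedAddCommGroup H] [InnerProductSpace ℂ H]
    (A Mn : H →ₗ[ℂ] H) (h γ Calg N₂ : ℝ)
    (hh : 0 < h) (hγ : 0 ≤ γ)
    (hpos : ∀ u : H, 0 ≤ (inner ℂ u (A u) : ℂ).re)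
    (E Et g : H)
    (heq : Complex.I • Et - (A E + (h ^ 2 : ℂ) • A (A E)) - Mn E
        + Complex.I • ((γ : ℂ) • E) = g)
    (hMn : ‖Mn E‖ ≤ Calg * N₂ * ‖A E‖) :
    ‖A (A E)‖ ≤ (1 / h ^ 2) * (‖Et‖ + ‖g‖ + γ * ‖E‖ + Calg * N₂ * ‖A E‖) := by
  have hrhs : A E + ((h ^ 2 : ℝ) : ℂ) • A (A E)
      = Complex.I • Et - Mn E + Complex.I • ((γ : ℂ) • E) - g := by
    rw [← heq, Complex.ofReal_pow]
    abel
  have hγE : ‖Complex.I • ((γ : ℂ) • E)‖ = γ * ‖E‖ := by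
    rw [norm_smul, norm_smul, Complex.norm_I, Complex.norm_real, Real.norm_of_nonneg hγ, one_mul]
  have hbound : ‖A E + ((h ^ 2 : ℝ) : ℂ) • A (A E)‖
      ≤ ‖Et‖ + ‖g‖ + γ * ‖E‖ + Calg * N₂ * ‖A E‖ := by
    rw [hrhs]
    calc ‖Complex.I • Et - Mn E + Complex.I • ((γ : ℂ) • E) - g‖
        ≤ ‖Complex.I • Et - Mn E‖ + ‖Complex.I • ((γ : ℂ) • E)‖ + ‖g‖ :=
          (norm_sub_le _ _).trans (by gcongr; exact norm_add_le _ _)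
      _ ≤ ‖Complex.I • Et‖ + ‖Mn E‖ + ‖Complex.I • ((γ : ℂ) • E)‖ + ‖g‖ := by
          gcongr; exact norm_sub_le _ _
      _ ≤ ‖Et‖ + ‖g‖ + γ * ‖E‖ + Calg * N₂ * ‖A E‖ := by
          rw [norm_smul, Complex.norm_I, one_mul, hγE]
          linarith
  calc ‖A (A E)‖
      ≤ (1 / h ^ 2) * ‖A E + ((h ^ 2 : ℝ) : ℂ) • A (A E)‖ :=
        norm_apply_le_of_re_inner_apply_nonneg A hpos (pow_pos hh 2) (A E)
    _ ≤ _ := by gcongr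

/-- Recovery of `H⁴` regularity of `E` from the Schrödinger equation
`i E_t - (A + h²A²)E - nE + iγE = g`.  The positive symmetric operator `A`
(the Dirichlet Laplacian) gives the elliptic estimate `‖A²E‖ ≤ h⁻²‖(A+h²A²)E‖`,
and the multiplication operator `Mn` (by `n`) satisfies the algebra bound
`‖Mn E‖ ≤ C ‖n‖₂ ‖E‖₂ = C·N₂·‖A E‖`.  Here `‖E‖₄ = ‖A²E‖`, `‖E‖₂ = ‖A E‖`. -/
theorem stmt11 {H : Type*} [NormedAddCommGroup H] [InnerProductSpace ℂ H]
    (A Mn : H →ₗ[ℂ] H) (h γ Calg N₂ : ℝ)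
    (hh : 0 < h) (hγ : 0 ≤ γ) (hCalg : 0 ≤ Calg) (hN₂ : 0 ≤ N₂)
    (hsym : ∀ u v : H, (inner ℂ (A u) v : ℂ) = inner ℂ u (A v))
    (hpos : ∀ u : H, 0 ≤ (inner ℂ u (A u) : ℂ).re)
    (E Et g : H)
    (heq : Complex.I • Et - (A E + (h ^ 2 : ℂ) • A (A E)) - Mn E
        + Complex.I • ((γ : ℂ) • E) = g)
    (hMn : ‖Mn E‖ ≤ Calg * N₂ * ‖A E‖) :
    ‖A (A E)‖ ≤ (1 / h ^ 2) * (‖Et‖ + ‖g‖ + γ * ‖E‖ + Calg * N₂ * ‖A E‖) :=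
  stmt11_general A Mn h γ Calg N₂ hh hγ hpos E Et g heq hMn
end
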